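/- Let G be a world graph, ℐ and 𝒟 DFAs over the alphabet E, ℳ = 𝒟 × G the product partial DFA, A : Y → Y a sensor alteration, and let Ō be any DFA over Σ whose language is the complement (within Σ*) of L(P) = { O(r) : r ∈ L(ℐ) ∩ Walks(G) }. Then A is deceptive for ℐ and 𝒟 if and only if there exist no walk r ∈ Walks(G) and word t ∈ Σ* such that t = O_A(r), r is accepted by ℳ, and t is accepted by Ō. -/
import Mathlib


/-- A world graph: regions `V`, edges `E`, events `Y`, with source/target maps,
an initial vertex, and an observation function assigning to each edge a nonempty
finite set of events. -/
structure WorldGraph (V E Y : Type*) where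
  src : E → V
  tgt : E → V
  v0 : V
  obs : E → Finset Y
  obs_nonempty : ∀ e, obs e ≠ ∅

namespace WorldGraph

variable {V E Y : Type*}

/-- A walk of the world graph: a finite word `e₁ ⋯ eₙ` over `E` such that
`src e₁ = v₀` and `tgt eᵢ = src eᵢ₊₁` for all `1 ≤ i < n` (the empty word is a walk). -/
def IsWalk (G : WorldGraph V E Y) (w : List E) : Prop :=
  (∀ h : w ≠ [], G.src (w.head h) = G.v0) ∧
    ∀ (i : ℕ) (h : i + 1 < w.length),
      G.tgt (w.get ⟨i, Nat.lt_of_succ_lt h⟩) = G.src (w.get ⟨i + 1, h⟩)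

/-- The observation sequence of a word of edges: each edge's observation,
viewed as a multiset of events. -/
def obsSeq (G : WorldGraph V E Y) (w : List E) : List (Multiset Y) :=
  w.map fun e => (G.obs e).val

/-- The observation sequence of a word of edges under a sensor alteration `A : Y → Y`:
each edge `e` produces the multiset obtained by applying `A` to every element of
`obs e` (with multiplicity). -/
def obsSeqAlt (G : WorldGraph V E Y) (A : Y → Y) (w : List E) : List (Multiset Y) :=
  w.map fun e => Multiset.map A (G.obs e).val

end WorldGraph

open Classical in
/-- The product of a DFA `A` over alphabet `E` with a world graph `G`:
a partial DFA, modeled as a total DFA on `Option (Q × V)` where `none` is a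
rejecting sink standing for "undefined". States are pairs `(q, v)`, the initial
state is `(q₀, v₀)`, transitions follow an edge `e` only when `src e` matches the
current vertex, and accepting states are `F × V`. -/
noncomputable def prodDFA {V E Y Q : Type*} (A : DFA E Q) (G : WorldGraph V E Y) :
    DFA E (Option (Q × V)) where
  step := fun s e =>
    match s with
    | none => none
    | some (q, v) => if G.src e = v then some (A.step q e, G.tgt e) else none
  start := some (A.start, G.v0)
  accept := {s | ∃ q v, s = some (q, v) ∧ q ∈ A.accept}

/-- A sensor alteration `A : Y → Y` is deceptive for the itinerary DFA `I` and the
deviation DFA `D` on the world graph `G` if every walk in `L(D) ∩ Walks(G)` produces,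
under `A`, the same observation sequence as some walk in `L(I) ∩ Walks(G)`. -/
def Deceptive {V E Y QI QD : Type*} (G : WorldGraph V E Y)
    (I : DFA E QI) (D : DFA E QD) (A : Y → Y) : Prop :=
  ∀ r : List E, r ∈ D.accepts → G.IsWalk r →
    ∃ r' : List E, r' ∈ I.accepts ∧ G.IsWalk r' ∧ G.obsSeqAlt A r = G.obsSeq r'

/-- The observation-relaxation of the product partial DFA `A × G`: an NFA over
multisets of events with the same states, initial state and accepting states,
whose transitions on letter `x` follow any edge `e` with `O(e) = x` on which the
product transition is defined. -/
def relaxNFA {V E Y Q : Type*} (A : DFA E Q) (G : WorldGraph V E Y) :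
    NFA (Multiset Y) (Q × V) where
  step := fun p x =>
    {p' | ∃ e : E, G.src e = p.2 ∧ (G.obs e).val = x ∧ p' = (A.step p.1 e, G.tgt e)}
  start := {(A.start, G.v0)}
  accept := {p | p.1 ∈ A.accept}

/-- The observation-relaxation of the product partial DFA `D × G` under a sensor
alteration `A`: transitions on letter `x` follow any edge `e` with `O_A(e) = x`
on which the product transition is defined. -/
def relaxNFAAlt {V E Y Q : Type*} (D : DFA E Q) (G : WorldGraph V E Y) (A : Y → Y) :
    NFA (Multiset Y) (Q × V) where
  step := fun p x =>
    {p' | ∃ e : E, G.src e = p.2 ∧ Multiset.map A (G.obs e).val = x ∧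
      p' = (D.step p.1 e, G.tgt e)}
  start := {(D.start, G.v0)}
  accept := {p | p.1 ∈ D.accept}

private lemma prod_evalFrom {V E Y QD : Type*} (G : WorldGraph V E Y) (D : DFA E QD) :
    ∀ (r : List E) (q : QD) (v : V),
      (∀ h : r ≠ [], G.src (r.head h) = v) →
      (∀ (i : ℕ) (h : i + 1 < r.length),
        G.tgt (r.get ⟨i, Nat.lt_of_succ_lt h⟩) = G.src (r.get ⟨i + 1, h⟩)) →
      ∃ v', (prodDFA D G).evalFrom (some (q, v)) r = some (D.evalFrom q r, v') := by
  intro r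
  induction r with
  | nil => intro q v _ _; exact ⟨v, rfl⟩
  | cons e rest ih =>
    intro q v hhead hchain
    have hsrc : G.src e = v := hhead (by simp)
    have hstep : (prodDFA D G).step (some (q, v)) e = some (D.step q e, G.tgt e) := by
      simp [prodDFA, hsrc]
    have hhead' : ∀ h : rest ≠ [], G.src (rest.head h) = G.tgt e := by
      intro h
      have hl : 0 + 1 < (e :: rest).length := by
        simp [List.length_pos_iff.mpr h]
      have := hchain 0 hl
      simpa [List.head_eq_getElem] using this.symm
    have hchain' : ∀ (i : ℕ) (h : i + 1 < rest.length),
        G.tgt (rest.get ⟨i, Nat.lt_of_succ_lt h⟩) = G.src (rest.get ⟨i + 1, h⟩) := by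
      intro i h
      have hl : (i + 1) + 1 < (e :: rest).length := by simpa using Nat.succ_lt_succ h
      have := hchain (i + 1) hl
      simpa using this
    obtain ⟨v', hv'⟩ := ih (D.step q e) (G.tgt e) hhead' hchain'
    refine ⟨v', ?_⟩
    simp only [DFA.evalFrom, List.foldl_cons] at hv' ⊢
    rw [show (prodDFA D G).step (some (q, v)) e = some (D.step q e, G.tgt e) from hstep]
    exact hv'

private lemma prod_accepts_iff {V E Y QD : Type*} (G : WorldGraph V E Y) (D : DFA E QD)
    {r : List E} (hr : G.IsWalk r) :
    r ∈ (prodDFA D G).accepts ↔ r ∈ D.accepts := by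
  obtain ⟨v', hv'⟩ := prod_evalFrom G D r D.start G.v0 hr.1 hr.2
  rw [DFA.mem_accepts, DFA.mem_accepts]
  have hstart : (prodDFA D G).start = some (D.start, G.v0) := rfl
  show (prodDFA D G).evalFrom (prodDFA D G).start r ∈ (prodDFA D G).accept ↔ _
  rw [hstart, hv']
  simp only [prodDFA, Set.mem_setOf_eq, Option.some.injEq, Prod.mk.injEq]
  constructor
  · rintro ⟨q, w, ⟨hq, _⟩, hacc⟩
    rw [DFA.eval]; exact hq ▸ hacc
  · intro h; exact ⟨_, _, ⟨rfl, rfl⟩, h⟩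

/-- Let `Ō` be any DFA over `Σ` whose language is the complement within `Σ*` of
`L(P) = {O(r) : r ∈ L(ℐ) ∩ Walks(G)}`. Then `A` is deceptive for `ℐ` and `𝒟` iff
there exist no walk `r ∈ Walks(G)` and word `t ∈ Σ*` such that `t = O_A(r)`,
`r` is accepted by `ℳ = 𝒟 × G`, and `t` is accepted by `Ō`. -/
theorem deceptive_iff_no_witness {V E Y QI QD S : Type*}
    [Fintype V] [Fintype E] [Fintype Y]
    (G : WorldGraph V E Y) (I : DFA E QI) (D : DFA E QD) (A : Y → Y)
    (m : ℕ) (hm : m = Finset.univ.sup fun e : E => (G.obs e).card)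
    (Sig : Set (Multiset Y)) (hSig : Sig = {x | x ≠ 0 ∧ Multiset.card x ≤ m})
    (LP : Set (List (Multiset Y)))
    (hLP : LP = {t | ∃ r : List E, r ∈ I.accepts ∧ G.IsWalk r ∧ t = G.obsSeq r})
    (Obar : DFA (Multiset Y) S)
    (hObar : Obar.accepts = {t | (∀ z ∈ t, z ∈ Sig) ∧ t ∉ LP}) :
    Deceptive G I D A ↔
      ¬ ∃ (r : List E) (t : List (Multiset Y)),
        G.IsWalk r ∧ t = G.obsSeqAlt A r ∧
          r ∈ (prodDFA D G).accepts ∧ t ∈ Obar.accepts := by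
  constructor
  · rintro hdec ⟨r, t, hwalk, rfl, hrM, htO⟩
    have hrD : r ∈ D.accepts := (prod_accepts_iff G D hwalk).mp hrM
    obtain ⟨r', hr'I, hr'walk, heq⟩ := hdec r hrD hwalk
    rw [hObar] at htO
    exact htO.2 (hLP ▸ ⟨r', hr'I, hr'walk, heq⟩)
  · intro hno r hrD hrwalk
    by_contra hcon
    push_neg at hcon
    apply hno
    refine ⟨r, G.obsSeqAlt A r, hrwalk, rfl, (prod_accepts_iff G D hrwalk).mpr hrD, ?_⟩
    rw [hObar]
    constructor
    · intro z hz
      simp only [WorldGraph.obsSeqAlt, List.mem_map] at hz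
      obtain ⟨e, _, rfl⟩ := hz
      rw [hSig]
      refine ⟨?_, ?_⟩
      · simp only [ne_eq, Multiset.map_eq_zero]
        intro h0
        exact G.obs_nonempty e (Finset.val_eq_zero.mp h0)
      · rw [Multiset.card_map, hm]
        exact Finset.le_sup (f := fun e : E => (G.obs e).card) (Finset.mem_univ e)
    · intro hmem
      rw [hLP] at hmem
      obtain ⟨r', hr'I, hr'walk, heq⟩ := hmem
      exact hcon r' hr'I hr'walk heq
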